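/- (Theorema egregium in Brioschi form: the relation between the coefficients of the first and second fundamental forms obtained by substituting the intrinsic expression of the Gaussian curvature into K = (LN − M²)/(EG − F²).) For a smooth immersed parametrized surface r : U → ℝ³, at every point of U one has LN − M² = (D₁ − D₂)/(EG − F²), where D₁ = det [[−½E_vv + F_uv − ½G_uu, ½E_u, F_u − ½E_v], [F_v − ½G_u, E, F], [½G_v, F, G]] and D₂ = det [[0, ½E_v, ½G_u], [½E_v, E, F], [½G_u, F, G]]. -/

import Mathlib

noncomputable section

/-- Euclidean dot product on `ℝ³`. -/
def dot3 (x y : Fin 3 → ℝ) : ℝ := ∑ i, x i * y i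

/-- Partial derivative with respect to the first coordinate `u`. -/
def pdu {E : Type*} [NormedAddCommGroup E] [NormedSpace ℝ E]
    (f : ℝ × ℝ → E) (p : ℝ × ℝ) : E := fderiv ℝ f p (1, 0)

/-- Partial derivative with respect to the second coordinate `v`. -/
def pdv {E : Type*} [NormedAddCommGroup E] [NormedSpace ℝ E]
    (f : ℝ × ℝ → E) (p : ℝ × ℝ) : E := fderiv ℝ f p (0, 1)

variable (r : ℝ × ℝ → Fin 3 → ℝ)

/-- Coefficient `E = ⟨r_u, r_u⟩` of the first fundamental form. -/
def Ec (p : ℝ × ℝ) : ℝ := dot3 (pdu r p) (pdu r p)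

/-- Coefficient `F = ⟨r_u, r_v⟩` of the first fundamental form. -/
def Fc (p : ℝ × ℝ) : ℝ := dot3 (pdu r p) (pdv r p)

/-- Coefficient `G = ⟨r_v, r_v⟩` of the first fundamental form. -/
def Gc (p : ℝ × ℝ) : ℝ := dot3 (pdv r p) (pdv r p)

/-- `W = √(EG − F²)`. -/
def Wc (p : ℝ × ℝ) : ℝ := Real.sqrt (Ec r p * Gc r p - Fc r p ^ 2)

/-- Unit normal `n = (r_u × r_v)/W`. -/
def nc (p : ℝ × ℝ) : Fin 3 → ℝ := (Wc r p)⁻¹ • (crossProduct (pdu r p) (pdv r p))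

/-- Coefficient `L = ⟨r_uu, n⟩` of the second fundamental form. -/
def Lc (p : ℝ × ℝ) : ℝ := dot3 (pdu (pdu r) p) (nc r p)

/-- Coefficient `M = ⟨r_uv, n⟩` of the second fundamental form. -/
def Mc (p : ℝ × ℝ) : ℝ := dot3 (pdv (pdu r) p) (nc r p)

/-- Coefficient `N = ⟨r_vv, n⟩` of the second fundamental form. -/
def Nc (p : ℝ × ℝ) : ℝ := dot3 (pdv (pdv r) p) (nc r p)

/-- Christoffel symbol `Γ¹₁₁`. -/
def Γ111 (p : ℝ × ℝ) : ℝ :=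
  (Gc r p * pdu (Ec r) p - 2 * Fc r p * pdu (Fc r) p + Fc r p * pdv (Ec r) p) /
    (2 * Wc r p ^ 2)

/-- Christoffel symbol `Γ²₁₁`. -/
def Γ211 (p : ℝ × ℝ) : ℝ :=
  (2 * Ec r p * pdu (Fc r) p - Ec r p * pdv (Ec r) p - Fc r p * pdu (Ec r) p) /
    (2 * Wc r p ^ 2)

/-- Christoffel symbol `Γ¹₁₂`. -/
def Γ112 (p : ℝ × ℝ) : ℝ :=
  (Gc r p * pdv (Ec r) p - Fc r p * pdu (Gc r) p) / (2 * Wc r p ^ 2)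

/-- Christoffel symbol `Γ²₁₂`. -/
def Γ212 (p : ℝ × ℝ) : ℝ :=
  (Ec r p * pdu (Gc r) p - Fc r p * pdv (Ec r) p) / (2 * Wc r p ^ 2)

/-- Christoffel symbol `Γ¹₂₂`. -/
def Γ122 (p : ℝ × ℝ) : ℝ :=
  (2 * Gc r p * pdv (Fc r) p - Gc r p * pdu (Gc r) p - Fc r p * pdv (Gc r) p) /
    (2 * Wc r p ^ 2)

/-- Christoffel symbol `Γ²₂₂`. -/
def Γ222 (p : ℝ × ℝ) : ℝ :=
  (Ec r p * pdv (Gc r) p - 2 * Fc r p * pdv (Fc r) p + Fc r p * pdu (Gc r) p) /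
    (2 * Wc r p ^ 2)

/-- `Δ = L/√(EG − F²)`. -/
def Δ0 (p : ℝ × ℝ) : ℝ := Lc r p / Wc r p

/-- `Δ' = M/√(EG − F²)`. -/
def Δ1 (p : ℝ × ℝ) : ℝ := Mc r p / Wc r p

/-- `Δ'' = N/√(EG − F²)`. -/
def Δ2 (p : ℝ × ℝ) : ℝ := Nc r p / Wc r p

/-- Brioschi determinant `D₁`. -/
def D1 (p : ℝ × ℝ) : ℝ :=
  Matrix.det
    !![-(1 / 2) * pdv (pdv (Ec r)) p + pdv (pdu (Fc r)) p - (1 / 2) * pdu (pdu (Gc r)) p,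
        (1 / 2) * pdu (Ec r) p, pdu (Fc r) p - (1 / 2) * pdv (Ec r) p;
      pdv (Fc r) p - (1 / 2) * pdu (Gc r) p, Ec r p, Fc r p;
      (1 / 2) * pdv (Gc r) p, Fc r p, Gc r p]

/-- Brioschi determinant `D₂`. -/
def D2 (p : ℝ × ℝ) : ℝ :=
  Matrix.det
    !![0, (1 / 2) * pdv (Ec r) p, (1 / 2) * pdu (Gc r) p;
      (1 / 2) * pdv (Ec r) p, Ec r p, Fc r p;
      (1 / 2) * pdu (Gc r) p, Fc r p, Gc r p]

/-! Differentiating `E`, `F`, `G` expresses the Christoffel symbols of the first kind through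
the first fundamental form: `⟨r_uu, r_u⟩ = ½E_u`, `⟨r_uu, r_v⟩ = F_u − ½E_v`, `⟨r_uv, r_u⟩ = ½E_v`,
`⟨r_uv, r_v⟩ = ½G_u`, `⟨r_vv, r_u⟩ = F_v − ½G_u`, `⟨r_vv, r_v⟩ = ½G_v`. Differentiating the second
and fourth of these once more and using `r_uuv = r_uvu` gives
`−½E_vv + F_uv − ½G_uu = ⟨r_uu, r_vv⟩ − ⟨r_uv, r_uv⟩`. Hence `D₁ − D₂` is a polynomial in the
vectors `r_u, r_v, r_uu, r_uv, r_vv`, namely `[r_uu, r_u, r_v] [r_vv, r_u, r_v] − [r_uv, r_u, r_v]²`.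
As `L, M, N` are these triple products divided by `W`, and `W² = EG − F²` by Lagrange's identity,
the formula follows.
-/

open Matrix Topology

section Calculus

variable {E : Type*} [NormedAddCommGroup E] [NormedSpace ℝ E]
  {V : Type*} [NormedAddCommGroup V] [NormedSpace ℝ V]

theorem contDiffAt_pdu {n m : WithTop ℕ∞} {f : ℝ × ℝ → V} {p : ℝ × ℝ}
    (hf : ContDiffAt ℝ n f p) (hmn : m + 1 ≤ n) : ContDiffAt ℝ m (pdu f) p :=
  (hf.fderiv_right hmn).clm_apply contDiffAt_const

theorem contDiffAt_pdv {n m : WithTop ℕ∞} {f : ℝ × ℝ → V} {p : ℝ × ℝ}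
    (hf : ContDiffAt ℝ n f p) (hmn : m + 1 ≤ n) : ContDiffAt ℝ m (pdv f) p :=
  (hf.fderiv_right hmn).clm_apply contDiffAt_const

theorem differentiableAt_pdu {f : ℝ × ℝ → V} {p : ℝ × ℝ} (hf : ContDiffAt ℝ 2 f p) :
    DifferentiableAt ℝ (pdu f) p :=
  (contDiffAt_pdu (m := 1) hf (by norm_num)).differentiableAt one_ne_zero

theorem differentiableAt_pdv {f : ℝ × ℝ → V} {p : ℝ × ℝ} (hf : ContDiffAt ℝ 2 f p) :
    DifferentiableAt ℝ (pdv f) p :=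
  (contDiffAt_pdv (m := 1) hf (by norm_num)).differentiableAt one_ne_zero

theorem fderiv_fun_fderiv_apply {f : E → V} {x : E} (hf : DifferentiableAt ℝ (fderiv ℝ f) x)
    (v w : E) : fderiv ℝ (fun z => fderiv ℝ f z v) x w = fderiv ℝ (fderiv ℝ f) x w v := by
  rw [fderiv_clm_apply hf (differentiableAt_const v)]
  simp

theorem pdv_pdu_eq_pdu_pdv {f : ℝ × ℝ → V} {p : ℝ × ℝ} (hf : ContDiffAt ℝ 2 f p) :
    pdv (pdu f) p = pdu (pdv f) p := by
  have hd : DifferentiableAt ℝ (fderiv ℝ f) p :=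
    (hf.fderiv_right (m := 1) (by norm_num)).differentiableAt one_ne_zero
  unfold pdu pdv
  rw [fderiv_fun_fderiv_apply hd, fderiv_fun_fderiv_apply hd]
  exact hf.isSymmSndFDerivAt (by simp) _ _

theorem ContDiffAt.dotProduct {ι : Type*} [Fintype ι] {n : WithTop ℕ∞} {f g : E → ι → ℝ}
    {x : E} (hf : ContDiffAt ℝ n f x) (hg : ContDiffAt ℝ n g x) :
    ContDiffAt ℝ n (fun z => f z ⬝ᵥ g z) x :=
  ContDiffAt.sum fun i _ => (contDiffAt_pi.1 hf i).mul (contDiffAt_pi.1 hg i)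

theorem fderiv_dotProduct_apply {ι : Type*} [Fintype ι] {f g : E → ι → ℝ} {x : E}
    (hf : DifferentiableAt ℝ f x) (hg : DifferentiableAt ℝ g x) (w : E) :
    fderiv ℝ (fun z => f z ⬝ᵥ g z) x w = fderiv ℝ f x w ⬝ᵥ g x + f x ⬝ᵥ fderiv ℝ g x w := by
  have hfg := HasFDerivAt.fun_sum (u := Finset.univ) fun i _ =>
    (hasFDerivAt_pi'.1 hf.hasFDerivAt i).mul' (hasFDerivAt_pi'.1 hg.hasFDerivAt i)
  rw [HasFDerivAt.fderiv (f := fun z => f z ⬝ᵥ g z) hfg]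
  simp [dotProduct, Finset.sum_add_distrib, add_comm, mul_comm]

theorem pdu_dotProduct {ι : Type*} [Fintype ι] {f g : ℝ × ℝ → ι → ℝ} {p : ℝ × ℝ}
    (hf : DifferentiableAt ℝ f p) (hg : DifferentiableAt ℝ g p) :
    pdu (fun z => f z ⬝ᵥ g z) p = pdu f p ⬝ᵥ g p + f p ⬝ᵥ pdu g p :=
  fderiv_dotProduct_apply hf hg (1, 0)

theorem pdv_dotProduct {ι : Type*} [Fintype ι] {f g : ℝ × ℝ → ι → ℝ} {p : ℝ × ℝ}
    (hf : DifferentiableAt ℝ f p) (hg : DifferentiableAt ℝ g p) :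
    pdv (fun z => f z ⬝ᵥ g z) p = pdv f p ⬝ᵥ g p + f p ⬝ᵥ pdv g p :=
  fderiv_dotProduct_apply hf hg (0, 1)

end Calculus

/-- Up to the common correction `⟨d, d⟩ (⟨a, a⟩⟨b, b⟩ − ⟨a, b⟩²)`, the two determinants are the
Gram determinants `det ([c a b]ᵀ [e a b]) = [c, a, b] [e, a, b]` and `det ([d a b]ᵀ [d a b])`. -/
theorem brioschi_det_identity (a b c d e : Fin 3 → ℝ) :
    det !![c ⬝ᵥ e - d ⬝ᵥ d, c ⬝ᵥ a, c ⬝ᵥ b; a ⬝ᵥ e, a ⬝ᵥ a, a ⬝ᵥ b; e ⬝ᵥ b, a ⬝ᵥ b, b ⬝ᵥ b]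
      - det !![0, d ⬝ᵥ a, d ⬝ᵥ b; d ⬝ᵥ a, a ⬝ᵥ a, a ⬝ᵥ b; d ⬝ᵥ b, a ⬝ᵥ b, b ⬝ᵥ b]
      = (c ⬝ᵥ a ⨯₃ b) * (e ⬝ᵥ a ⨯₃ b) - (d ⬝ᵥ a ⨯₃ b) ^ 2 := by
  simp only [det_fin_three, of_apply, cons_val', cons_val_zero, cons_val_fin_one, cons_val_one,
    cons_val, cross_apply, vec3_dotProduct, dotProduct_cons, vecHead, vecTail, Function.comp_apply,
    Fin.succ_zero_eq_one, Fin.succ_one_eq_two, dotProduct_of_isEmpty]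
  ring

section Surface

variable {r} {p : ℝ × ℝ}

theorem half_pdu_Ec (hr : ContDiffAt ℝ 2 r p) :
    1 / 2 * pdu (Ec r) p = pdu (pdu r) p ⬝ᵥ pdu r p := by
  have h : pdu (Ec r) p = pdu (pdu r) p ⬝ᵥ pdu r p + pdu r p ⬝ᵥ pdu (pdu r) p :=
    pdu_dotProduct (differentiableAt_pdu hr) (differentiableAt_pdu hr)
  rw [h, dotProduct_comm (pdu r p)]
  ring

theorem half_pdv_Ec (hr : ContDiffAt ℝ 2 r p) :
    1 / 2 * pdv (Ec r) p = pdv (pdu r) p ⬝ᵥ pdu r p := by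
  have h : pdv (Ec r) p = pdv (pdu r) p ⬝ᵥ pdu r p + pdu r p ⬝ᵥ pdv (pdu r) p :=
    pdv_dotProduct (differentiableAt_pdu hr) (differentiableAt_pdu hr)
  rw [h, dotProduct_comm (pdu r p)]
  ring

theorem half_pdu_Gc (hr : ContDiffAt ℝ 2 r p) :
    1 / 2 * pdu (Gc r) p = pdv (pdu r) p ⬝ᵥ pdv r p := by
  have h : pdu (Gc r) p = pdu (pdv r) p ⬝ᵥ pdv r p + pdv r p ⬝ᵥ pdu (pdv r) p :=
    pdu_dotProduct (differentiableAt_pdv hr) (differentiableAt_pdv hr)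
  rw [h, dotProduct_comm (pdv r p), pdv_pdu_eq_pdu_pdv hr]
  ring

theorem half_pdv_Gc (hr : ContDiffAt ℝ 2 r p) :
    1 / 2 * pdv (Gc r) p = pdv (pdv r) p ⬝ᵥ pdv r p := by
  have h : pdv (Gc r) p = pdv (pdv r) p ⬝ᵥ pdv r p + pdv r p ⬝ᵥ pdv (pdv r) p :=
    pdv_dotProduct (differentiableAt_pdv hr) (differentiableAt_pdv hr)
  rw [h, dotProduct_comm (pdv r p)]
  ring

theorem pdu_Fc_sub_half_pdv_Ec (hr : ContDiffAt ℝ 2 r p) :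
    pdu (Fc r) p - 1 / 2 * pdv (Ec r) p = pdu (pdu r) p ⬝ᵥ pdv r p := by
  have h : pdu (Fc r) p = pdu (pdu r) p ⬝ᵥ pdv r p + pdu r p ⬝ᵥ pdu (pdv r) p :=
    pdu_dotProduct (differentiableAt_pdu hr) (differentiableAt_pdv hr)
  rw [h, half_pdv_Ec hr, dotProduct_comm (pdu r p), pdv_pdu_eq_pdu_pdv hr]
  ring

theorem pdv_Fc_sub_half_pdu_Gc (hr : ContDiffAt ℝ 2 r p) :
    pdv (Fc r) p - 1 / 2 * pdu (Gc r) p = pdu r p ⬝ᵥ pdv (pdv r) p := by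
  have h : pdv (Fc r) p = pdv (pdu r) p ⬝ᵥ pdv r p + pdu r p ⬝ᵥ pdv (pdv r) p :=
    pdv_dotProduct (differentiableAt_pdu hr) (differentiableAt_pdv hr)
  rw [h, half_pdu_Gc hr]
  ring

theorem pdv_pdu_Fc_sub_half_pdv_pdv_Ec (hr : ContDiffAt ℝ 3 r p) :
    pdv (pdu (Fc r)) p - 1 / 2 * pdv (pdv (Ec r)) p
      = pdu (pdv (pdu r)) p ⬝ᵥ pdv r p + pdu (pdu r) p ⬝ᵥ pdv (pdv r) p := by
  have hr2 : ∀ᶠ z in 𝓝 p, ContDiffAt ℝ 2 r z := (hr.of_le (by norm_num)).eventually (by simp)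
  have hru : ContDiffAt ℝ 2 (pdu r) p := contDiffAt_pdu hr (by norm_num)
  have hrv : ContDiffAt ℝ 2 (pdv r) p := contDiffAt_pdv hr (by norm_num)
  have hE : ContDiffAt ℝ 2 (Ec r) p := hru.dotProduct hru
  have hF : ContDiffAt ℝ 2 (Fc r) p := hru.dotProduct hrv
  calc _ = pdv (fun z => pdu (Fc r) z - 1 / 2 * pdv (Ec r) z) p := by
        conv_rhs => rw [pdv]
        rw [fderiv_fun_sub (differentiableAt_pdu hF) ((differentiableAt_pdv hE).const_mul _),
          fderiv_const_mul (differentiableAt_pdv hE)]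
        rfl
    _ = pdv (fun z => pdu (pdu r) z ⬝ᵥ pdv r z) p := by
        rw [pdv, pdv, Filter.EventuallyEq.fderiv_eq
          (hr2.mono fun z hz => pdu_Fc_sub_half_pdv_Ec hz)]
    _ = _ := by
        rw [pdv_dotProduct (differentiableAt_pdu hru) (hrv.differentiableAt two_ne_zero),
          pdv_pdu_eq_pdu_pdv hru]

theorem half_pdu_pdu_Gc (hr : ContDiffAt ℝ 3 r p) :
    1 / 2 * pdu (pdu (Gc r)) p
      = pdu (pdv (pdu r)) p ⬝ᵥ pdv r p + pdv (pdu r) p ⬝ᵥ pdv (pdu r) p := by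
  have hr2 : ContDiffAt ℝ 2 r p := hr.of_le (by norm_num)
  have hru : ContDiffAt ℝ 2 (pdu r) p := contDiffAt_pdu hr (by norm_num)
  have hrv : ContDiffAt ℝ 2 (pdv r) p := contDiffAt_pdv hr (by norm_num)
  have hG : ContDiffAt ℝ 2 (Gc r) p := hrv.dotProduct hrv
  calc _ = pdu (fun z => 1 / 2 * pdu (Gc r) z) p := by
        conv_rhs => rw [pdu]
        rw [fderiv_const_mul (differentiableAt_pdu hG)]
        rfl
    _ = pdu (fun z => pdv (pdu r) z ⬝ᵥ pdv r z) p := by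
        rw [pdu, pdu, Filter.EventuallyEq.fderiv_eq
          ((hr2.eventually (by simp)).mono fun z hz => half_pdu_Gc hz)]
    _ = _ := by
        rw [pdu_dotProduct (differentiableAt_pdv hru) (hrv.differentiableAt two_ne_zero),
          ← pdv_pdu_eq_pdu_pdv hr2]

theorem brioschi_second_order (hr : ContDiffAt ℝ 3 r p) :
    -(1 / 2) * pdv (pdv (Ec r)) p + pdv (pdu (Fc r)) p - (1 / 2) * pdu (pdu (Gc r)) p
      = pdu (pdu r) p ⬝ᵥ pdv (pdv r) p - pdv (pdu r) p ⬝ᵥ pdv (pdu r) p := by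
  linarith [pdv_pdu_Fc_sub_half_pdv_pdv_Ec hr, half_pdu_pdu_Gc hr]

theorem D1_sub_D2 (hr : ContDiffAt ℝ 3 r p) :
    D1 r p - D2 r p
      = (pdu (pdu r) p ⬝ᵥ pdu r p ⨯₃ pdv r p) * (pdv (pdv r) p ⬝ᵥ pdu r p ⨯₃ pdv r p)
          - (pdv (pdu r) p ⬝ᵥ pdu r p ⨯₃ pdv r p) ^ 2 := by
  have hr2 : ContDiffAt ℝ 2 r p := hr.of_le (by norm_num)
  rw [D1, D2, brioschi_second_order hr, pdu_Fc_sub_half_pdv_Ec hr2, pdv_Fc_sub_half_pdu_Gc hr2,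
    half_pdu_Ec hr2, half_pdv_Ec hr2, half_pdu_Gc hr2, half_pdv_Gc hr2]
  exact brioschi_det_identity _ _ _ _ _

theorem Ec_mul_Gc_sub_Fc_sq :
    Ec r p * Gc r p - Fc r p ^ 2 = pdu r p ⨯₃ pdv r p ⬝ᵥ pdu r p ⨯₃ pdv r p := by
  rw [cross_dot_cross, dotProduct_comm (pdv r p) (pdu r p), ← sq]
  rfl

theorem Wc_sq : Wc r p ^ 2 = Ec r p * Gc r p - Fc r p ^ 2 := by
  refine Real.sq_sqrt ?_
  rw [Ec_mul_Gc_sub_Fc_sq]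
  simpa using dotProduct_star_self_nonneg (pdu r p ⨯₃ pdv r p)

theorem Lc_mul_Nc_sub_Mc_sq :
    Lc r p * Nc r p - Mc r p ^ 2
      = ((pdu (pdu r) p ⬝ᵥ pdu r p ⨯₃ pdv r p) * (pdv (pdv r) p ⬝ᵥ pdu r p ⨯₃ pdv r p)
          - (pdv (pdu r) p ⬝ᵥ pdu r p ⨯₃ pdv r p) ^ 2) / (Ec r p * Gc r p - Fc r p ^ 2) := by
  have hdot (x : Fin 3 → ℝ) : dot3 x (nc r p) = (Wc r p)⁻¹ * (x ⬝ᵥ pdu r p ⨯₃ pdv r p) :=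
    dotProduct_smul _ _ _
  rw [Lc, Mc, Nc, hdot, hdot, hdot, ← Wc_sq]
  ring

end Surface

theorem brioschi_gauss_equation
    (U : Set (ℝ × ℝ)) (hU : IsOpen U)
    (hr : ContDiffOn ℝ (⊤ : ℕ∞) r U) :
    ∀ p ∈ U,
      Lc r p * Nc r p - Mc r p ^ 2 =
        (D1 r p - D2 r p) / (Ec r p * Gc r p - Fc r p ^ 2) := by
  intro p hp
  have hr3 : ContDiffAt ℝ 3 r p :=
    (hr.contDiffAt (hU.mem_nhds hp)).of_le (WithTop.coe_le_coe.mpr le_top)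
  rw [Lc_mul_Nc_sub_Mc_sq, D1_sub_D2 hr3]

end
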